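/- arXiv:2503.20767 — 2 statements merged into one kernel-verified Lean document; each statement's English description precedes it below -/
import Mathlib

section
/- Let (Ω, F, P) be a probability space and θ, τ ∈ ℝ with θ < τ. Let (L_α)_{α ∈ [0,1]} be a family of real-valued random variables such that: (i) for every ω ∈ Ω, the map α ↦ L_α(ω) is nondecreasing and right-continuous on [0,1]; and (ii) each L_α is a valid confidence lower bound for θ at level 1 − α, i.e., P(θ ≥ L_α) ≥ 1 − α for every α ∈ [0,1]. Define the inverted p-value p(ω) = inf({α ∈ [0,1] : L_α(ω) ≥ τ} ∪ {1}), and assume p is measurable. Then p is super-uniform: P(p ≤ u) ≤ u for every u ∈ [0,1]. -/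
open MeasureTheory

/-- **Inverting monotone confidence lower bounds yields a valid p-value.**
Let `θ < τ`, and let `(L a)_{a ∈ [0,1]}` be a family of random variables such that
for every `ω` the map `a ↦ L a ω` is nondecreasing and right-continuous on `[0,1]`,
and each `L a` is a valid level-`(1 - a)` confidence lower bound for `θ`.
Then the inverted p-value `p ω = inf ({a ∈ [0,1] : L a ω ≥ τ} ∪ {1})` is super-uniform:
`P(p ≤ u) ≤ u` for all `u ∈ [0,1]`. -/
theorem pvalue_from_inverted_confidence_bounds
    {Ω : Type*} [MeasurableSpace Ω] (P : Measure Ω) [IsProbabilityMeasure P]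
    (θ τ : ℝ) (hθτ : θ < τ)
    (L : ℝ → Ω → ℝ)
    (hmono : ∀ ω : Ω, MonotoneOn (fun a => L a ω) (Set.Icc (0 : ℝ) 1))
    (hrc : ∀ ω : Ω, ∀ a ∈ Set.Icc (0 : ℝ) 1,
      ContinuousWithinAt (fun b => L b ω) (Set.Icc a 1) a)
    (hvalid : ∀ a ∈ Set.Icc (0 : ℝ) 1,
      ENNReal.ofReal (1 - a) ≤ P {ω | L a ω ≤ θ})
    (p : Ω → ℝ)
    (hp : ∀ ω : Ω, p ω = sInf ({a ∈ Set.Icc (0 : ℝ) 1 | τ ≤ L a ω} ∪ {1}))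
    (hpmeas : Measurable p) :
    ∀ u ∈ Set.Icc (0 : ℝ) 1, P {ω | p ω ≤ u} ≤ ENNReal.ofReal u := by
  intro u hu
  rcases eq_or_lt_of_le hu.2 with h1 | h1
  · rw [h1]
    simpa using prob_le_one
  -- u < 1
  have hsub : {ω | p ω ≤ u} ⊆ {ω | L u ω ≤ θ}ᶜ := by
    intro ω hω
    simp only [Set.mem_compl_iff, Set.mem_setOf_eq, not_le]
    have hτ : τ ≤ L u ω := by
      set T : Set ℝ := {a ∈ Set.Icc (0 : ℝ) 1 | τ ≤ L a ω} ∪ {1} with hT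
      have hTne : T.Nonempty := ⟨1, Or.inr rfl⟩
      have hinf : sInf T ≤ u := by rw [← hp ω]; exact hω
      have hS : ∀ b ∈ Set.Ioc u 1, τ ≤ L b ω := by
        intro b hb
        have hab : ∃ a ∈ T, a < b := by
          by_contra hcon
          push_neg at hcon
          have : b ≤ sInf T := le_csInf hTne hcon
          linarith [hb.1]
        obtain ⟨a, haT, hab⟩ := hab
        have haS : a ∈ Set.Icc (0 : ℝ) 1 ∧ τ ≤ L a ω := by
          rcases haT with h | h
          · exact ⟨h.1, h.2⟩
          · simp only [Set.mem_singleton_iff] at h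
            exact absurd (h ▸ hab) (not_lt.mpr hb.2)
        have hmle : L a ω ≤ L b ω :=
          hmono ω haS.1 ⟨le_trans haS.1.1 hab.le, hb.2⟩ hab.le
        exact le_trans haS.2 hmle
      have htend : Filter.Tendsto (fun b => L b ω) (nhdsWithin u (Set.Ioc u 1))
          (nhds (L u ω)) :=
        (hrc ω u ⟨hu.1, hu.2⟩).mono_left (nhdsWithin_mono u Set.Ioc_subset_Icc_self)
      have hne : (nhdsWithin u (Set.Ioc u 1)).NeBot := by
        rw [nhdsWithin_Ioc_eq_nhdsGT h1]
        infer_instance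
      exact ge_of_tendsto htend
        (Filter.eventually_iff_exists_mem.mpr
          ⟨Set.Ioc u 1, self_mem_nhdsWithin, hS⟩)
    linarith
  have hm : MeasurableSet {ω | p ω ≤ u} := hpmeas measurableSet_Iic
  have h2 : {ω | L u ω ≤ θ} ⊆ {ω | p ω ≤ u}ᶜ := by
    intro ω hω hpω
    exact hsub hpω hω
  have hlow : ENNReal.ofReal (1 - u) ≤ P {ω | p ω ≤ u}ᶜ :=
    le_trans (hvalid u hu) (measure_mono h2)
  have hc : P {ω | p ω ≤ u}ᶜ = 1 - P {ω | p ω ≤ u} :=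
    prob_compl_eq_one_sub hm
  have hA : P {ω | p ω ≤ u} = 1 - P {ω | p ω ≤ u}ᶜ := by
    rw [hc, ENNReal.sub_sub_cancel ENNReal.one_ne_top prob_le_one]
  calc P {ω | p ω ≤ u} = 1 - P {ω | p ω ≤ u}ᶜ := hA
    _ ≤ 1 - ENNReal.ofReal (1 - u) := tsub_le_tsub_left hlow 1
    _ = ENNReal.ofReal u := by
        rw [← ENNReal.ofReal_one, ← ENNReal.ofReal_sub _ (by linarith : (0:ℝ) ≤ 1 - u)]
        norm_num
end

section
/- Let 𝒳 be a measurable space, μ_lab a probability measure on 𝒳, w : 𝒳 → [0, ∞) measurable with ∫ w dμ_lab = 1, and let μ_des be the probability measure on 𝒳 with density w with respect to μ_lab. Let K be a Markov kernel from 𝒳 to ℝ, f : 𝒳 → ℝ measurable, and g : ℝ → ℝ measurable. Assume g ∘ f is integrable with respect to μ_des and (x, y) ↦ g(y) is integrable with respect to μ_des ⊗ K. Then the population-level metric θ := ∫ g(y) d(μ_des ⊗ K)(x, y) satisfies the prediction-powered decomposition θ = ∫ g(f(x)) dμ_des(x) + ∫ w(x)·(g(y) − g(f(x))) d(μ_lab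 ⊗ K)(x, y), where the second integrand is integrable with respect to μ_lab ⊗ K. -/
open MeasureTheory ProbabilityTheory

/-- **Prediction-powered decomposition of the population-level metric.**
With `μdes` the design distribution (with density ratio `w` w.r.t. the labeled
distribution `μlab`), `K` a Markov kernel modeling the conditional label distribution,
`f` the predictive model and `g` the success-criterion function, the population-level
metric `θ = ∫ g(y) d(μdes ⊗ₘ K)` decomposes as the mean prediction under the design
distribution plus the density-ratio-weighted mean prediction bias under the labeled
distribution. -/
theorem prediction_powered_decomposition
    {𝒳 : Type*} [MeasurableSpace 𝒳]
    (μlab : Measure 𝒳) [IsProbabilityMeasure μlab]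
    (w : 𝒳 → ℝ) (hw_meas : Measurable w) (hw_nonneg : ∀ x, 0 ≤ w x)
    (hw_int : ∫ x, w x ∂μlab = 1)
    (μdes : Measure 𝒳) [IsProbabilityMeasure μdes]
    (hdes : μdes = μlab.withDensity (fun x => ENNReal.ofReal (w x)))
    (K : ProbabilityTheory.Kernel 𝒳 ℝ) [IsMarkovKernel K]
    (f : 𝒳 → ℝ) (hf : Measurable f)
    (g : ℝ → ℝ) (hg : Measurable g)
    (hgf_int : Integrable (fun x => g (f x)) μdes)
    (hg_int : Integrable (fun q : 𝒳 × ℝ => g q.2) (μdes ⊗ₘ K)) :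
    Integrable (fun q : 𝒳 × ℝ => w q.1 * (g q.2 - g (f q.1))) (μlab ⊗ₘ K) ∧
    ∫ q : 𝒳 × ℝ, g q.2 ∂(μdes ⊗ₘ K)
      = ∫ x, g (f x) ∂μdes
        + ∫ q : 𝒳 × ℝ, w q.1 * (g q.2 - g (f q.1)) ∂(μlab ⊗ₘ K) := by
  have hρ : Measurable fun x => ENNReal.ofReal (w x) := hw_meas.ennreal_ofReal
  have hρ' : Measurable fun q : 𝒳 × ℝ => ENNReal.ofReal (w q.1) :=
    hρ.comp measurable_fst
  -- compProd commutes with withDensity on the first factor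
  have key : μdes ⊗ₘ K = (μlab ⊗ₘ K).withDensity (fun q => ENNReal.ofReal (w q.1)) := by
    rw [hdes]
    ext s hs
    rw [Measure.compProd_apply hs, withDensity_apply _ hs,
      lintegral_withDensity_eq_lintegral_mul _ hρ
        (Kernel.measurable_kernel_prodMk_left hs),
      ← lintegral_indicator hs, Measure.lintegral_compProd (hρ'.indicator hs)]
    congr 1
    ext x
    have h1 : ∀ y : ℝ, s.indicator (fun q : 𝒳 × ℝ => ENNReal.ofReal (w q.1)) (x, y)
        = (Prod.mk x ⁻¹' s).indicator (fun _ => ENNReal.ofReal (w x)) y := by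
      intro y; rfl
    simp_rw [h1]
    rw [lintegral_indicator (measurable_prodMk_left hs), setLIntegral_const]
    rfl
  -- integrability of g∘f∘fst wrt μdes ⊗ K
  have hmap : (μdes ⊗ₘ K).map Prod.fst = μdes := Measure.fst_compProd μdes K
  have hgff_int : Integrable (fun q : 𝒳 × ℝ => g (f q.1)) (μdes ⊗ₘ K) := by
    have h2 : Integrable (fun x => g (f x)) ((μdes ⊗ₘ K).map Prod.fst) := by
      rw [hmap]; exact hgf_int
    exact (integrable_map_measure (hg.comp hf).aestronglyMeasurable
      measurable_fst.aemeasurable).mp h2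
  have hdiff_int : Integrable (fun q : 𝒳 × ℝ => g q.2 - g (f q.1)) (μdes ⊗ₘ K) :=
    hg_int.sub hgff_int
  -- rewrite via withDensity with ℝ≥0-valued density
  have hW : (fun q : 𝒳 × ℝ => ENNReal.ofReal (w q.1))
      = fun q : 𝒳 × ℝ => (((w q.1).toNNReal : NNReal) : ENNReal) := by
    ext q; simp [ENNReal.ofReal]
  have hWmeas : Measurable fun q : 𝒳 × ℝ => (w q.1).toNNReal :=
    (hw_meas.comp measurable_fst).real_toNNReal
  have hwd : Integrable (fun q : 𝒳 × ℝ => g q.2 - g (f q.1))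
      ((μlab ⊗ₘ K).withDensity fun q => (((w q.1).toNNReal : NNReal) : ENNReal)) := by
    rw [← hW, ← key]; exact hdiff_int
  have hint : Integrable (fun q : 𝒳 × ℝ => w q.1 * (g q.2 - g (f q.1))) (μlab ⊗ₘ K) := by
    have h3 := (integrable_withDensity_iff_integrable_smul hWmeas).mp hwd
    apply h3.congr
    filter_upwards with q
    simp [NNReal.smul_def, Real.coe_toNNReal _ (hw_nonneg q.1)]
  refine ⟨hint, ?_⟩
  have hIeq : ∫ q : 𝒳 × ℝ, w q.1 * (g q.2 - g (f q.1)) ∂(μlab ⊗ₘ K)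
      = ∫ q : 𝒳 × ℝ, g q.2 - g (f q.1) ∂(μdes ⊗ₘ K) := by
    rw [key, hW, integral_withDensity_eq_integral_smul hWmeas]
    congr 1; ext q
    simp [NNReal.smul_def, Real.coe_toNNReal _ (hw_nonneg q.1)]
  rw [hIeq, integral_sub hg_int hgff_int]
  have hfst : ∫ q : 𝒳 × ℝ, g (f q.1) ∂(μdes ⊗ₘ K) = ∫ x, g (f x) ∂μdes := by
    rw [Measure.integral_compProd hgff_int]
    simp
  rw [hfst]; ring
end
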